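/- arXiv:1101.3624 — 2 statements merged into one kernel-verified Lean document; each statement's English description precedes it below -/
import Mathlib

section
/- For n ≥ 3, if G is the (n-1)-regular bipartite graph with parts {x_1,...,x_n} and {y_1,...,y_n} and edges x_i y_j for i ≠ j (the complete bipartite graph K_{n,n} minus a perfect matching), then the metric dimension of G equals n-1. -/
/-- `W` resolves `G`: every vertex is determined by its distance vector to `W`. -/
def Resolves {V : Type*} (G : SimpleGraph V) (W : Set V) : Prop :=
  ∀ u v : V, (∀ w ∈ W, G.dist u w = G.dist v w) → u = v

/-- Metric dimension: minimum cardinality of a (finite) resolving set. -/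
noncomputable def metricDim {V : Type*} (G : SimpleGraph V) : ℕ :=
  sInf {k | ∃ W : Set V, W.Finite ∧ W.ncard = k ∧ Resolves G W}

/-- `K_{n,n}` minus a perfect matching: parts `inl i` (the xᵢ) and `inr j` (the yⱼ),
with `xᵢ ~ yⱼ` iff `i ≠ j`. -/
def matchGraph (n : ℕ) : SimpleGraph (Fin n ⊕ Fin n) where
  Adj u v := match u, v with
    | Sum.inl i, Sum.inr j => i ≠ j
    | Sum.inr j, Sum.inl i => i ≠ j
    | _, _ => False
  symm := ⟨by rintro (i|i) (j|j) h <;> exact h⟩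
  loopless := ⟨by rintro (i|i) h <;> exact h⟩

/-!
Swapping two indices `i ≠ j` is an automorphism of `matchGraph n` fixing every vertex of any
other index, and a resolving set is fixed pointwise by no nontrivial automorphism. Hence the
indices met by a resolving set miss at most one value, so it has at least `n - 1` elements.
Conversely, for `n ≥ 3` the set `{xₘ | m ≠ a}` resolves: `d(xᵢ, xₘ)` is `0` or `2` and
`d(yᵢ, xₘ)` is `3` or `1` according as `i = m` or not.
-/

namespace SimpleGraph

variable {V V' : Type*} {G : SimpleGraph V} {G' : SimpleGraph V'}

lemma Hom.edist_map_le (f : G →g G') (u v : V) : G'.edist (f u) (f v) ≤ G.edist u v := by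
  rcases eq_or_ne (G.edist u v) ⊤ with h | h
  · simp [h]
  obtain ⟨p, hp⟩ := exists_walk_of_edist_ne_top h
  rw [← hp, ← Walk.length_map f]
  exact edist_le _

lemma Iso.edist_map (f : G ≃g G') (u v : V) : G'.edist (f u) (f v) = G.edist u v :=
  le_antisymm (f.toHom.edist_map_le u v) (by simpa using f.symm.toHom.edist_map_le (f u) (f v))

lemma Iso.dist_map (f : G ≃g G') (u v : V) : G'.dist (f u) (f v) = G.dist u v := by
  simp only [dist, f.edist_map]

end SimpleGraph

lemma Resolves.apply_eq_of_forall_mem {V : Type*} {G : SimpleGraph V} {W : Set V}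
    (hW : Resolves G W) (f : G ≃g G) (hf : ∀ w ∈ W, f w = w) (u : V) : f u = u :=
  hW _ _ fun w hw => by rw [← f.dist_map u w, hf w hw]

lemma metricDim_eq_of_resolves {V : Type*} {G : SimpleGraph V} {W : Set V} (hfin : W.Finite)
    (hW : Resolves G W)
    (hmin : ∀ W' : Set V, W'.Finite → Resolves G W' → W.ncard ≤ W'.ncard) :
    metricDim G = W.ncard :=
  le_antisymm (Nat.sInf_le ⟨W, hfin, rfl, hW⟩)
    (le_csInf ⟨_, W, hfin, rfl, hW⟩ fun _ ⟨W', hfin', hk, hW'⟩ => hk ▸ hmin W' hfin' hW')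

namespace matchGraph

open SimpleGraph Sum

variable {n : ℕ}

@[simp] lemma adj_inl_inr {i j : Fin n} : (matchGraph n).Adj (inl i) (inr j) ↔ i ≠ j := .rfl
@[simp] lemma adj_inr_inl {i j : Fin n} : (matchGraph n).Adj (inr i) (inl j) ↔ j ≠ i := .rfl
@[simp] lemma not_adj_inl_inl {i j : Fin n} : ¬(matchGraph n).Adj (inl i) (inl j) := id
@[simp] lemma not_adj_inr_inr {i j : Fin n} : ¬(matchGraph n).Adj (inr i) (inr j) := id

def permIso (σ : Equiv.Perm (Fin n)) : matchGraph n ≃g matchGraph n where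
  toEquiv := σ.sumCongr σ
  map_rel_iff' := by rintro (i | i) (j | j) <;> simp

lemma edist_inl_inl (hn : 3 ≤ n) {i j : Fin n} (h : i ≠ j) :
    (matchGraph n).edist (inl i) (inl j) = 2 := by
  obtain ⟨k, hki, hkj⟩ := Fin.exists_ne_and_ne_of_two_lt i j (by omega)
  refine edist_eq_two_iff.mpr ⟨by simpa using h, id, inr k, ?_⟩
  exact ⟨hki.symm, hkj.symm⟩

lemma edist_inl_inr_self (hn : 3 ≤ n) (i : Fin n) :
    (matchGraph n).edist (inl i) (inr i) = 3 := by
  obtain ⟨j, hji, -⟩ := Fin.exists_ne_and_ne_of_two_lt i i (by omega)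
  obtain ⟨k, hki, hkj⟩ := Fin.exists_ne_and_ne_of_two_lt i j (by omega)
  have hlt : 2 < (matchGraph n).edist (inl i) (inr i) := by
    refine two_lt_edist_iff.mpr ⟨by simp, fun h => h rfl, ?_⟩
    ext (m | m) <;> simp [mem_commonNeighbors]
  let p : (matchGraph n).Walk (inl i) (inr i) :=
    .cons (adj_inl_inr.mpr hji.symm) <|
      .cons (adj_inr_inl.mpr hkj) <| .cons (adj_inl_inr.mpr hki) .nil
  exact le_antisymm (edist_le p) (Order.add_one_le_of_lt hlt)

lemma dist_inl_inl (hn : 3 ≤ n) (i j : Fin n) :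
    (matchGraph n).dist (inl i) (inl j) = if i = j then 0 else 2 := by
  split_ifs with h
  · simp [h]
  · simp [SimpleGraph.dist, edist_inl_inl hn h]

lemma dist_inr_inl (hn : 3 ≤ n) (i j : Fin n) :
    (matchGraph n).dist (inr i) (inl j) = if i = j then 3 else 1 := by
  split_ifs with h
  · rw [h, dist_comm, SimpleGraph.dist, edist_inl_inr_self hn]
    rfl
  · simpa using Ne.symm h

lemma resolves_inl_compl (hn : 3 ≤ n) (a : Fin n) :
    Resolves (matchGraph n) (inl '' {a}ᶜ) := by
  intro u v h
  replace h : ∀ m ≠ a, (matchGraph n).dist u (inl m) = (matchGraph n).dist v (inl m) :=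
    fun m hm => h _ ⟨m, hm, rfl⟩
  obtain ⟨b, hb, -⟩ := Fin.exists_ne_and_ne_of_two_lt a a (by omega)
  rcases u with i | i <;> rcases v with j | j <;>
    simp only [dist_inl_inl hn, dist_inr_inl hn] at h
  -- comparing at `b` separates the two sides, at whichever of `i`, `j` is not `a` the indices
  all_goals
    have := h b hb
    have := h i
    have := h j
    grind

lemma sub_one_le_ncard_of_resolves {W : Set (Fin n ⊕ Fin n)} (hfin : W.Finite)
    (hW : Resolves (matchGraph n) W) : n - 1 ≤ W.ncard := by
  set S := Sum.elim id id '' W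
  have hS : Sᶜ.Subsingleton := by
    intro i hi j hj
    have hfix : ∀ w ∈ W, permIso (Equiv.swap i j) w = w := by
      rintro (m | m) hw <;>
      · have hm : m ∈ S := ⟨_, hw, rfl⟩
        simp [permIso, Equiv.swap_apply_of_ne_of_ne (ne_of_mem_of_not_mem hm hi)
          (ne_of_mem_of_not_mem hm hj)]
    simpa [permIso, eq_comm] using hW.apply_eq_of_forall_mem _ hfix (inl i)
  have hsum : S.ncard + Sᶜ.ncard = n := by rw [Set.ncard_add_ncard_compl, Nat.card_fin]
  calc n - 1 ≤ S.ncard := by have := Set.ncard_le_one_iff_subsingleton.mpr hS; omega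
    _ ≤ W.ncard := Set.ncard_image_le hfin

end matchGraph

/-- for `n ≥ 3`, the metric dimension of `K_{n,n}` minus a
perfect matching equals `n - 1`. -/
theorem stmt0 (n : ℕ) (hn : 3 ≤ n) : metricDim (matchGraph n) = n - 1 := by
  let a : Fin n := ⟨0, by omega⟩
  have hcard : (Sum.inl '' {a}ᶜ : Set (Fin n ⊕ Fin n)).ncard = n - 1 := by
    rw [Set.ncard_image_of_injective _ Sum.inl_injective, Set.ncard_compl, Nat.card_fin,
      Set.ncard_singleton]
  rw [← hcard]
  exact metricDim_eq_of_resolves (Set.toFinite _) (matchGraph.resolves_inl_compl hn a)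
    fun W hfin hW => hcard ▸ matchGraph.sub_one_le_ncard_of_resolves hfin hW
end

section
/- For n ≥ 5, the graph G' = K_{2,2} minus a perfect matching embedded in an (n-2)-regular bipartite graph G(n,n) contributes at least 2 vertices to any resolving set of G; more precisely, if G' = K_{m,m} \ E(C_{2m}) with m ∈ {2,3} is a connected component structure inside G, then β(G') = 2. -/
/-- `G` is a bipartite graph on parts `{inl i}`, `{inr j}` (each of size `n`)
which is `k`-regular. -/
def IsRegBipartite (n k : ℕ) (G : SimpleGraph (Fin n ⊕ Fin n)) : Prop :=
  (∀ i j : Fin n, ¬ G.Adj (Sum.inl i) (Sum.inl j) ∧ ¬ G.Adj (Sum.inr i) (Sum.inr j)) ∧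
  (∀ v, (G.neighborSet v).ncard = k)

/-- The vertices `x (0), y (0), x (1), y (1), …, x (m-1), y (m-1)` form one of the
even cycles removed from `K_{n,n}` to obtain `G`; i.e. inside `G` these `2m`
vertices induce `K_{m,m} \ E(C_{2m})` (cycle edges `xᵢ yᵢ` and `yᵢ x_{i+1 mod m}`
are absent, all other cross pairs among them are edges). -/
def IsRemovedCycle {n : ℕ} (G : SimpleGraph (Fin n ⊕ Fin n)) (m : ℕ)
    (x y : Fin m → Fin n) : Prop :=
  Function.Injective x ∧ Function.Injective y ∧
  ∀ i j : Fin m,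
    (G.Adj (Sum.inl (x i)) (Sum.inr (y j)) ↔ (j ≠ i ∧ (i : ℕ) ≠ ((j : ℕ) + 1) % m))

/-- The vertex set of the subgraph `G'` determined by the removed cycle `x, y`. -/
def cycVerts {n m : ℕ} (x y : Fin m → Fin n) : Set (Fin n ⊕ Fin n) :=
  {v | (∃ i, v = Sum.inl (x i)) ∨ (∃ i, v = Sum.inr (y i))}

/-- `S` resolves the vertices of `A` within `G` (distances taken in `G`). -/
def ResolvesWithin {V : Type*} (G : SimpleGraph V) (A S : Set V) : Prop :=
  ∀ u ∈ A, ∀ v ∈ A, (∀ w ∈ S, G.dist u w = G.dist v w) → u = v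

/-!
Since `2 (n - 2) > n`, two vertices on the same side of `G` always have a common neighbour, so
distances in `G` are `2` within a side and `1` or `3` across, according to adjacency. Each vertex
of the removed cycle has exactly two non-neighbours, and both lie on the cycle; hence a vertex off
the cycle is adjacent to every cycle vertex of the other side and cannot separate two cycle
vertices of the same side. If a set meets the cycle in at most one vertex `c`, it therefore fails
to separate the two non-neighbours of `c` (of any cycle vertex, if it misses the cycle). For
`m ≤ 3` the distances to `x i` and `y i` separate all cycle vertices, which is a finite check.
-/

open SimpleGraph Sum

lemma ncard_setOf_isLeft_ne {n : ℕ} (u : Fin n ⊕ Fin n) :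
    {w : Fin n ⊕ Fin n | w.isLeft ≠ u.isLeft}.ncard = n := by
  have h : {w : Fin n ⊕ Fin n | w.isLeft ≠ u.isLeft} =
      Set.range (if u.isLeft then inr else inl) := by
    ext (w | w) <;> cases u <;> simp
  rw [h, Set.ncard_range_of_injective (by cases u <;> simp [inl_injective, inr_injective])]
  simp

namespace IsRegBipartite

variable {n k : ℕ} {G : SimpleGraph (Fin n ⊕ Fin n)} {u v w a b : Fin n ⊕ Fin n}

lemma isLeft_ne_of_adj (hG : IsRegBipartite n k G) (h : G.Adj u v) : u.isLeft ≠ v.isLeft := by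
  rcases u with i | i <;> rcases v with j | j
  · exact absurd h (hG.1 i j).1
  · simp
  · simp
  · exact absurd h (hG.1 i j).2

lemma neighborSet_subset (hG : IsRegBipartite n k G) (u : Fin n ⊕ Fin n) :
    G.neighborSet u ⊆ {w | w.isLeft ≠ u.isLeft} :=
  fun _ h => (hG.isLeft_ne_of_adj h).symm

lemma commonNeighbors_nonempty (hG : IsRegBipartite n k G) (hk : n < 2 * k)
    (h : u.isLeft = v.isLeft) : (G.commonNeighbors u v).Nonempty := by
  have hunion : (G.neighborSet u ∪ G.neighborSet v).ncard ≤ n := by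
    calc _ ≤ {w : Fin n ⊕ Fin n | w.isLeft ≠ u.isLeft}.ncard :=
          Set.ncard_le_ncard (Set.union_subset (hG.neighborSet_subset u)
            (by simpa only [h] using hG.neighborSet_subset v))
      _ = n := ncard_setOf_isLeft_ne u
  have := Set.ncard_inter_add_ncard_union (G.neighborSet u) (G.neighborSet v)
  rw [hG.2 u, hG.2 v] at this
  exact Set.nonempty_of_ncard_ne_zero (s := G.neighborSet u ∩ G.neighborSet v) (by omega)

lemma dist_eq_two (hG : IsRegBipartite n k G) (hk : n < 2 * k) (hne : u ≠ v)
    (h : u.isLeft = v.isLeft) : G.dist u v = 2 := by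
  have hcommon := hG.commonNeighbors_nonempty hk h
  have hedist : G.edist u v = 2 :=
    edist_eq_two_iff.mpr ⟨hne, fun hadj => hG.isLeft_ne_of_adj hadj h, hcommon⟩
  have hreach : G.Reachable u v := reachable_of_edist_ne_top (by simp [hedist])
  exact_mod_cast hreach.coe_dist_eq_edist.trans hedist

lemma dist_eq_three (hG : IsRegBipartite n k G) (hk : n < 2 * k) (h : u.isLeft ≠ v.isLeft)
    (hadj : ¬ G.Adj u v) : G.dist u v = 3 := by
  obtain ⟨w, hvw⟩ : (G.neighborSet v).Nonempty :=
    Set.nonempty_of_ncard_ne_zero (by rw [hG.2 v]; omega)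
  have hside : u.isLeft = w.isLeft :=
    (Bool.eq_not_of_ne h).trans (Bool.eq_not_of_ne (hG.isLeft_ne_of_adj hvw).symm).symm
  obtain ⟨z, hz⟩ := hG.commonNeighbors_nonempty hk hside
  rw [mem_commonNeighbors] at hz
  let p : G.Walk u v := .cons hz.1 (.cons hz.2.symm (.cons (G.adj_symm hvw) .nil))
  have hreach : G.Reachable u v := ⟨p⟩
  have hlt : 2 < G.edist u v := by
    refine two_lt_edist_iff.mpr ⟨fun he => h (he ▸ rfl), hadj, ?_⟩
    refine Set.eq_empty_of_forall_notMem fun c hc => ?_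
    rw [mem_commonNeighbors] at hc
    exact h ((Bool.eq_not_of_ne (hG.isLeft_ne_of_adj hc.1)).trans
      (Bool.eq_not_of_ne (hG.isLeft_ne_of_adj hc.2)).symm)
  have hle : G.dist u v ≤ 3 := dist_le p
  rw [← hreach.coe_dist_eq_edist] at hlt
  norm_cast at hlt
  omega

lemma adj_of_ne_of_ne (hG : IsRegBipartite n (n - 2) G) (hab : a ≠ b) (ha : ¬ G.Adj u a)
    (hb : ¬ G.Adj u b) (hsa : a.isLeft ≠ u.isLeft) (hsb : b.isLeft ≠ u.isLeft)
    (hsw : w.isLeft ≠ u.isLeft) (hwa : w ≠ a) (hwb : w ≠ b) : G.Adj u w := by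
  set P := {w : Fin n ⊕ Fin n | w.isLeft ≠ u.isLeft}
  have hsub : G.neighborSet u ⊆ P \ {a, b} := by
    rintro c hc
    refine ⟨hG.neighborSet_subset u hc, ?_⟩
    rintro (rfl | rfl)
    exacts [ha hc, hb hc]
  have hcard : (P \ {a, b}).ncard ≤ (G.neighborSet u).ncard := by
    rw [Set.ncard_sdiff (by rintro c (rfl | rfl) <;> assumption), Set.ncard_pair hab,
      ncard_setOf_isLeft_ne, hG.2 u]
  have heq := Set.eq_of_subset_of_ncard_le hsub hcard
  have hw : w ∈ P \ {a, b} := ⟨hsw, by rintro (rfl | rfl) <;> contradiction⟩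
  exact (heq ▸ hw : w ∈ G.neighborSet u)

end IsRegBipartite

/-- The distance in `G` between two vertices of the removed cycle, read through the indexing
`inl i ↦ x i`, `inr j ↦ y j` (see `dist_sumMap`). -/
def cycleDist (m : ℕ) : Fin m ⊕ Fin m → Fin m ⊕ Fin m → ℕ
  | inl i, inl i' => if i = i' then 0 else 2
  | inr j, inr j' => if j = j' then 0 else 2
  | inl i, inr j | inr j, inl i => if j ≠ i ∧ (i : ℕ) ≠ ((j : ℕ) + 1) % m then 1 else 3

lemma isLeft_ne_of_cycleDist_eq_three {m : ℕ} {p q : Fin m ⊕ Fin m} (h : cycleDist m p q = 3) :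
    p.isLeft ≠ q.isLeft := by
  rcases p with i | i <;> rcases q with j | j <;> simp only [cycleDist] at h <;>
    split_ifs at h <;> simp_all

lemma exists_cycleDist_eq_three {m : ℕ} (hm : 2 ≤ m) (p : Fin m ⊕ Fin m) :
    ∃ q q', q ≠ q' ∧ cycleDist m p q = 3 ∧ cycleDist m p q' = 3 := by
  obtain ⟨k, rfl⟩ : ∃ k, m = k + 2 := ⟨m - 2, by omega⟩
  have hsucc (j : Fin (k + 2)) : ((j + 1 : Fin (k + 2)) : ℕ) = ((j : ℕ) + 1) % (k + 2) := by
    simp [Fin.val_add]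
  rcases p with i | j
  · refine ⟨inr i, inr (i - 1), by simp [eq_sub_iff_add_eq], by simp [cycleDist], ?_⟩
    simp [cycleDist, ← hsucc]
  · refine ⟨inl j, inl (j + 1), by simp, by simp [cycleDist], ?_⟩
    simp [cycleDist, ← hsucc]

lemma eq_of_cycleDist_eq {m : ℕ} (hm : m = 2 ∨ m = 3) :
    ∀ (i : Fin m) (p q : Fin m ⊕ Fin m), cycleDist m p (inl i) = cycleDist m q (inl i) →
      cycleDist m p (inr i) = cycleDist m q (inr i) → p = q := by
  rcases hm with rfl | rfl <;> decide

lemma cycVerts_eq_range {n m : ℕ} (x y : Fin m → Fin n) :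
    cycVerts x y = Set.range (Sum.map x y) := by
  ext v
  simp only [cycVerts, Set.mem_ofPred_eq, Set.mem_range, Sum.exists, Sum.map_inl, Sum.map_inr,
    eq_comm (a := v)]

lemma sumMap_mem_cycVerts {n m : ℕ} (x y : Fin m → Fin n) (p : Fin m ⊕ Fin m) :
    Sum.map x y p ∈ cycVerts x y :=
  cycVerts_eq_range x y ▸ ⟨p, rfl⟩

section RemovedCycle

variable {n m : ℕ} {G : SimpleGraph (Fin n ⊕ Fin n)} {x y : Fin m → Fin n}
  (hn : 5 ≤ n) (hreg : IsRegBipartite n (n - 2) G) (hcyc : IsRemovedCycle G m x y)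
include hn hreg hcyc

lemma dist_sumMap (p q : Fin m ⊕ Fin m) :
    G.dist (Sum.map x y p) (Sum.map x y q) = cycleDist m p q := by
  have hk : n < 2 * (n - 2) := by omega
  have hcross (i j : Fin m) : G.dist (inl (x i)) (inr (y j)) =
      if j ≠ i ∧ (i : ℕ) ≠ ((j : ℕ) + 1) % m then 1 else 3 := by
    split_ifs with h
    · exact dist_eq_one_iff_adj.mpr ((hcyc.2.2 i j).mpr h)
    · exact hreg.dist_eq_three hk (by simp) fun hadj => h ((hcyc.2.2 i j).mp hadj)
  rcases p with i | i <;> rcases q with j | j <;> simp only [Sum.map_inl, Sum.map_inr, cycleDist]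
  · split_ifs with h
    · rw [h, dist_self]
    · exact hreg.dist_eq_two hk (fun he => h (hcyc.1 (inl_injective he))) rfl
  · exact hcross i j
  · rw [G.dist_comm]; exact hcross j i
  · split_ifs with h
    · rw [h, dist_self]
    · exact hreg.dist_eq_two hk (fun he => h (hcyc.2.1 (inr_injective he))) rfl

lemma adj_of_notMem_cycVerts (hm : 2 ≤ m) {c w : Fin n ⊕ Fin n} (hc : c ∈ cycVerts x y)
    (hw : w ∉ cycVerts x y) (hside : w.isLeft ≠ c.isLeft) : G.Adj c w := by
  rw [cycVerts_eq_range] at hc hw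
  obtain ⟨p, rfl⟩ := hc
  obtain ⟨q, q', hqq', hq, hq'⟩ := exists_cycleDist_eq_three hm p
  have hnonadj {r} (hr : cycleDist m p r = 3) : ¬ G.Adj (Sum.map x y p) (Sum.map x y r) := by
    rw [← dist_eq_one_iff_adj, dist_sumMap hn hreg hcyc, hr]
    decide
  have hside' {r} (hr : cycleDist m p r = 3) :
      (Sum.map x y r).isLeft ≠ (Sum.map x y p).isLeft := by
    simpa only [isLeft_map] using (isLeft_ne_of_cycleDist_eq_three hr).symm
  exact hreg.adj_of_ne_of_ne ((Sum.map_injective.mpr ⟨hcyc.1, hcyc.2.1⟩).ne hqq')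
    (hnonadj hq) (hnonadj hq') (hside' hq) (hside' hq') hside
    (fun h => hw ⟨q, h.symm⟩) (fun h => hw ⟨q', h.symm⟩)

lemma dist_eq_dist_of_notMem_cycVerts (hm : 2 ≤ m) {u v w : Fin n ⊕ Fin n}
    (hu : u ∈ cycVerts x y) (hv : v ∈ cycVerts x y) (huv : u.isLeft = v.isLeft)
    (hw : w ∉ cycVerts x y) : G.dist u w = G.dist v w := by
  by_cases hs : w.isLeft = u.isLeft
  · have hk : n < 2 * (n - 2) := by omega
    rw [hreg.dist_eq_two hk (fun h => hw (by rwa [← h])) hs.symm,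
      hreg.dist_eq_two hk (fun h => hw (by rwa [← h])) (huv ▸ hs).symm]
  · rw [dist_eq_one_iff_adj.mpr (adj_of_notMem_cycVerts hn hreg hcyc hm hu hw hs),
      dist_eq_one_iff_adj.mpr (adj_of_notMem_cycVerts hn hreg hcyc hm hv hw (huv ▸ hs))]

lemma two_le_ncard_inter_of_resolvesWithin (hm : 2 ≤ m) {T : Set (Fin n ⊕ Fin n)}
    (hT : ResolvesWithin G (cycVerts x y) T) : 2 ≤ (T ∩ cycVerts x y).ncard := by
  by_contra hlt
  have hsub : (T ∩ cycVerts x y).Subsingleton :=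
    Set.ncard_le_one_iff_subsingleton.mp (by omega)
  obtain ⟨p, hp⟩ : ∃ p, ∀ w ∈ T, w ∈ cycVerts x y → w = Sum.map x y p := by
    rcases (T ∩ cycVerts x y).eq_empty_or_nonempty with h | ⟨c, hc⟩
    · exact ⟨inl ⟨0, by omega⟩, fun w hwT hwC =>
        absurd (h.subset ⟨hwT, hwC⟩) (Set.notMem_empty w)⟩
    · obtain ⟨p, rfl⟩ : c ∈ Set.range (Sum.map x y) := cycVerts_eq_range x y ▸ hc.2
      exact ⟨p, fun w hwT hwC => hsub ⟨hwT, hwC⟩ hc⟩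
  obtain ⟨q, q', hqq', hq, hq'⟩ := exists_cycleDist_eq_three hm p
  refine hqq' (Sum.map_injective.mpr ⟨hcyc.1, hcyc.2.1⟩ ?_)
  refine hT _ (sumMap_mem_cycVerts x y q) _ (sumMap_mem_cycVerts x y q') fun w hwT => ?_
  by_cases hwC : w ∈ cycVerts x y
  · rw [hp w hwT hwC, G.dist_comm, dist_sumMap hn hreg hcyc, G.dist_comm,
      dist_sumMap hn hreg hcyc, hq, hq']
  · have hside : (Sum.map x y q).isLeft = (Sum.map x y q').isLeft := by
      simpa only [isLeft_map] using
        (Bool.eq_not_of_ne (isLeft_ne_of_cycleDist_eq_three hq).symm).trans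
          (Bool.eq_not_of_ne (isLeft_ne_of_cycleDist_eq_three hq').symm).symm
    exact dist_eq_dist_of_notMem_cycVerts hn hreg hcyc hm (sumMap_mem_cycVerts x y q)
      (sumMap_mem_cycVerts x y q') hside hwC

lemma resolvesWithin_pair (hm : m = 2 ∨ m = 3) (i : Fin m) :
    ResolvesWithin G (cycVerts x y) {inl (x i), inr (y i)} := by
  rw [ResolvesWithin, cycVerts_eq_range]
  rintro _ ⟨p, rfl⟩ _ ⟨q, rfl⟩ h
  have hl := h (Sum.map x y (inl i)) (by simp)
  have hr := h (Sum.map x y (inr i)) (by simp)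
  rw [dist_sumMap hn hreg hcyc, dist_sumMap hn hreg hcyc] at hl hr
  rw [eq_of_cycleDist_eq hm i p q hl hr]

end RemovedCycle

/-- for `n ≥ 5` and `m ∈ {2,3}`, let `G` be an `(n-2)`-regular
bipartite graph `G(n,n)` containing the subgraph `G' = K_{m,m} \ E(C_{2m})` on
one of the removed cycles (distances taken in `G`). Then `G'` contributes at
least `2` vertices to every resolving set of `G`, and `β(G') = 2`: some
`2`-subset of `V(G')` resolves `V(G')` in `G`, and no smaller set does. -/
theorem stmt13 (n m : ℕ) (hn : 5 ≤ n) (hm : m = 2 ∨ m = 3)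
    (G : SimpleGraph (Fin n ⊕ Fin n)) (hreg : IsRegBipartite n (n - 2) G)
    (x y : Fin m → Fin n) (hcyc : IsRemovedCycle G m x y) :
    (∀ W : Set (Fin n ⊕ Fin n), Resolves G W → 2 ≤ (W ∩ cycVerts x y).ncard) ∧
    (∃ S ⊆ cycVerts x y, S.ncard = 2 ∧ ResolvesWithin G (cycVerts x y) S) ∧
    (∀ S ⊆ cycVerts x y, ResolvesWithin G (cycVerts x y) S → 2 ≤ S.ncard) := by
  have hm2 : 2 ≤ m := by omega
  refine ⟨fun W hW => ?_, ?_, fun S hS hres => ?_⟩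
  · exact two_le_ncard_inter_of_resolvesWithin hn hreg hcyc hm2 fun u _ v _ => hW u v
  · let i : Fin m := ⟨0, by omega⟩
    refine ⟨{inl (x i), inr (y i)}, ?_, Set.ncard_pair (by simp),
      resolvesWithin_pair hn hreg hcyc hm i⟩
    rintro _ (rfl | rfl)
    exacts [Or.inl ⟨i, rfl⟩, Or.inr ⟨i, rfl⟩]
  · simpa only [Set.inter_eq_left.mpr hS] using
      two_le_ncard_inter_of_resolvesWithin hn hreg hcyc hm2 hres
end
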